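/- Let $a < b$, $q > 1$, $p = q/(q-1)$, $\alpha \in (0,1)$, $n = \lfloor \alpha \rfloor + 1 = 1$, $m \in (0,1]$, $0 \le a$, and let $f$ have continuous $(n+1)$-st derivative with $|f^{(n+1)}|^q$ $m$-convex on $[0, b/m]$. Then $\left|\frac{f^{(n)}(a)+f^{(n)}(b)}{2} - \frac{\Gamma(n-\alpha+1)}{2(b-a)^{n-\alpha}}\left[({}^C D_{a^+}^{\alpha} f)(b) + (-1)^n ({}^C D_{b^-}^{\alpha} f)(a)\right]\right| \le \frac{b-a}{2^{1+1/q}} \left(\frac{1}{p(n-\alpha)+1}\right)^{1/p}\left(|f^{(n+1)}(a)|^q + m|f^{(n+1)}(b/m)|^q\right)^{1/q}$. -/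

import Mathlib

noncomputable def caputoLeft (α : ℝ) (n : ℕ) (f : ℝ → ℝ) (a x : ℝ) : ℝ :=
  (1 / Real.Gamma ((n:ℝ) - α)) * ∫ t in a..x, (x - t) ^ ((n:ℝ) - α - 1) * iteratedDeriv n f t

noncomputable def caputoRight (α : ℝ) (n : ℕ) (f : ℝ → ℝ) (b x : ℝ) : ℝ :=
  ((-1:ℝ)^n / Real.Gamma ((n:ℝ) - α)) * ∫ t in x..b, (t - x) ^ ((n:ℝ) - α - 1) * iteratedDeriv n f t

/-!
With `r = 1 - α`, integrating `((x - a)^r - (b - x)^r) f''(x)` by parts produces exactly the two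
Caputo integrals, so the left-hand side equals
`(2 (b - a)^r)⁻¹ ∫_a^b ((x - a)^r - (b - x)^r) f''(x) dx`. Hölder's inequality splits this
integral. Since `t ↦ t^r` is subadditive, `|(x - a)^r - (b - x)^r| ≤ |2x - a - b|^r`, whose `p`-th
power integrates to `(b - a)^(pr+1) / (pr+1)`. Writing `x = t a + m (1 - t) (b/m)` with
`t = (b - x)/(b - a)`, `m`-convexity bounds `|f''|^q` by a chord, whose integral is
`(b - a) (|f''(a)|^q + m |f''(b/m)|^q) / 2`.
-/

open MeasureTheory Set

namespace Real

lemma abs_rpow_sub_rpow_le {u v r : ℝ} (hu : 0 ≤ u) (hv : 0 ≤ v) (hr0 : 0 ≤ r) (hr1 : r ≤ 1) :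
    |u ^ r - v ^ r| ≤ |u - v| ^ r := by
  wlog h : v ≤ u generalizing u v
  · rw [abs_sub_comm, abs_sub_comm u]
    exact this hv hu (le_of_not_ge h)
  have hsubadd : u ^ r ≤ (u - v) ^ r + v ^ r := by
    simpa using rpow_add_le_add_rpow (sub_nonneg.2 h) hv hr0 hr1
  rw [abs_of_nonneg (sub_nonneg.2 (rpow_le_rpow hv h hr0)), abs_of_nonneg (sub_nonneg.2 h)]
  linarith

end Real

lemma integral_abs_two_mul_sub_rpow {a b β : ℝ} (hab : a ≤ b) (hβ : 0 ≤ β) :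
    ∫ x in a..b, |2 * x - (a + b)| ^ β = (b - a) ^ (β + 1) / (β + 1) := by
  have hint (c d : ℝ) : IntervalIntegrable (fun y => |y| ^ β) volume c d :=
    (continuous_abs.rpow_const fun _ => Or.inr hβ).intervalIntegrable c d
  have hhalf : ∫ y in (0:ℝ)..(b - a), |y| ^ β = (b - a) ^ (β + 1) / (β + 1) := by
    rw [intervalIntegral.integral_congr (g := fun y => y ^ β) fun y hy => ?_,
      integral_rpow (Or.inl (by linarith)), Real.zero_rpow (by positivity), sub_zero]
    rw [uIcc_of_le (sub_nonneg.2 hab)] at hy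
    simp [abs_of_nonneg hy.1]
  have hsymm : ∫ y in -(b - a)..0, |y| ^ β = ∫ y in (0:ℝ)..(b - a), |y| ^ β := by
    simpa using (intervalIntegral.integral_comp_neg (a := 0) (b := b - a) fun y => |y| ^ β).symm
  have hsub := intervalIntegral.integral_comp_mul_sub (a := a) (b := b)
    (fun y => |y| ^ β) two_ne_zero (a + b)
  rw [hsub, show 2 * a - (a + b) = -(b - a) by ring, show 2 * b - (a + b) = b - a by ring,
    ← intervalIntegral.integral_add_adjacent_intervals (hint _ 0) (hint 0 _), hsymm, hhalf,
    smul_eq_mul]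
  ring

lemma integral_abs_rpow_sub_rpow_rpow_le {a b r p : ℝ} (hab : a ≤ b) (hr0 : 0 ≤ r) (hr1 : r ≤ 1)
    (hp : 0 ≤ p) :
    ∫ x in a..b, |(x - a) ^ r - (b - x) ^ r| ^ p ≤ (b - a) ^ (p * r + 1) / (p * r + 1) := by
  have hcont : Continuous fun x : ℝ => (x - a) ^ r - (b - x) ^ r := by
    fun_prop (disch := exact fun _ => Or.inr hr0)
  have hpr : 0 ≤ p * r := mul_nonneg hp hr0
  rw [← integral_abs_two_mul_sub_rpow hab hpr]
  refine intervalIntegral.integral_mono_on hab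
    ((hcont.abs.rpow_const fun _ => Or.inr hp).intervalIntegrable a b)
    ((by fun_prop (disch := intro; exact Or.inr hpr) :
      Continuous fun x : ℝ => |2 * x - (a + b)| ^ (p * r)).intervalIntegrable a b) fun x hx => ?_
  calc |(x - a) ^ r - (b - x) ^ r| ^ p ≤ (|x - a - (b - x)| ^ r) ^ p := by
        gcongr
        exact Real.abs_rpow_sub_rpow_le (by linarith [hx.1]) (by linarith [hx.2]) hr0 hr1
    _ = |2 * x - (a + b)| ^ (p * r) := by
        rw [← Real.rpow_mul (abs_nonneg _), mul_comm r p]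
        ring_nf

lemma intervalIntegral.integral_abs_mul_le_Lp_mul_Lq {φ ψ : ℝ → ℝ} {a b p q : ℝ} (hab : a ≤ b)
    (hpq : p.HolderConjugate q) (hφ : Continuous φ) (hψ : Continuous ψ) :
    ∫ x in a..b, |φ x * ψ x| ≤
      (∫ x in a..b, |φ x| ^ p) ^ (1 / p) * (∫ x in a..b, |ψ x| ^ q) ^ (1 / q) := by
  have hmemLp {χ : ℝ → ℝ} (hχ : Continuous χ) (e : ℝ) :
      MemLp χ (ENNReal.ofReal e) (volume.restrict (Ioc a b)) := by
    obtain ⟨M, hM⟩ := isCompact_Icc.exists_bound_of_continuousOn (hχ.continuousOn (s := Icc a b))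
    exact MemLp.of_bound hχ.aestronglyMeasurable.restrict M
      ((ae_restrict_iff' measurableSet_Ioc).2
        (ae_of_all _ fun x hx => hM x (Ioc_subset_Icc_self hx)))
  simp only [intervalIntegral.integral_of_le hab, abs_mul]
  exact integral_mul_le_Lp_mul_Lq_of_nonneg hpq (ae_of_all _ fun _ => abs_nonneg _)
    (ae_of_all _ fun _ => abs_nonneg _) (hmemLp hφ.abs p) (hmemLp hψ.abs q)

lemma abs_integral_rpow_sub_rpow_mul_le {h : ℝ → ℝ} {a b r p q C : ℝ} (hab : a ≤ b) (hr0 : 0 ≤ r)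
    (hr1 : r ≤ 1) (hpq : p.HolderConjugate q) (hh : Continuous h)
    (hC : ∫ x in a..b, |h x| ^ q ≤ C) :
    |∫ x in a..b, ((x - a) ^ r - (b - x) ^ r) * h x| ≤
      ((b - a) ^ (p * r + 1) / (p * r + 1)) ^ (1 / p) * C ^ (1 / q) := by
  have hw : Continuous fun x : ℝ => (x - a) ^ r - (b - x) ^ r := by
    fun_prop (disch := exact hr0)
  have hkernel := integral_abs_rpow_sub_rpow_rpow_le hab hr0 hr1 hpq.nonneg
  have hIw : 0 ≤ ∫ x in a..b, |(x - a) ^ r - (b - x) ^ r| ^ p :=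
    intervalIntegral.integral_nonneg hab fun _ _ => by positivity
  have hIh : 0 ≤ ∫ x in a..b, |h x| ^ q :=
    intervalIntegral.integral_nonneg hab fun _ _ => by positivity
  calc _ ≤ ∫ x in a..b, |((x - a) ^ r - (b - x) ^ r) * h x| :=
        intervalIntegral.abs_integral_le_integral_abs hab
    _ ≤ _ := intervalIntegral.integral_abs_mul_le_Lp_mul_Lq hab hpq hw hh
    _ ≤ _ := mul_le_mul (Real.rpow_le_rpow hIw hkernel (one_div_nonneg.2 hpq.nonneg))
        (Real.rpow_le_rpow hIh hC (one_div_nonneg.2 hpq.symm.nonneg)) (Real.rpow_nonneg hIh _)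
        (Real.rpow_nonneg (hIw.trans hkernel) _)

def MConvexOn (m : ℝ) (s : Set ℝ) (g : ℝ → ℝ) : Prop :=
  ∀ u ∈ s, ∀ v ∈ s, ∀ t ∈ Icc (0 : ℝ) 1, g (t * u + m * (1 - t) * v) ≤ t * g u + m * (1 - t) * g v

lemma MConvexOn.integral_le {m a b : ℝ} {s : Set ℝ} {g : ℝ → ℝ} (hg : MConvexOn m s g)
    (hm : m ≠ 0) (ha : a ∈ s) (hb : b / m ∈ s) (hab : a < b)
    (hint : IntervalIntegrable g volume a b) :
    ∫ x in a..b, g x ≤ (b - a) * (g a + m * g (b / m)) / 2 := by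
  have hba : 0 < b - a := sub_pos.2 hab
  have hchord : ∫ x in a..b, ((b - x) / (b - a) * g a + m * ((x - a) / (b - a)) * g (b / m))
      = (b - a) * (g a + m * g (b / m)) / 2 := by
    have hlin : (fun x => (b - x) / (b - a) * g a + m * ((x - a) / (b - a)) * g (b / m))
        = fun x => (b * g a - m * a * g (b / m)) / (b - a)
          + (m * g (b / m) - g a) / (b - a) * x := by
      funext x
      field_simp
      ring
    rw [hlin, intervalIntegral.integral_add intervalIntegrable_const
      (Continuous.intervalIntegrable (by fun_prop) _ _), intervalIntegral.integral_const,
      intervalIntegral.integral_const_mul, integral_id, smul_eq_mul]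
    field_simp
    ring
  rw [← hchord]
  refine intervalIntegral.integral_mono_on hab.le hint
    (Continuous.intervalIntegrable (by fun_prop) _ _) fun x hx => ?_
  have ht : (b - x) / (b - a) ∈ Icc (0 : ℝ) 1 :=
    ⟨div_nonneg (by linarith [hx.2]) hba.le, (div_le_one hba).2 (by linarith [hx.1])⟩
  have hx : (b - x) / (b - a) * a + m * (1 - (b - x) / (b - a)) * (b / m) = x := by
    field_simp
    ring
  have := hg a ha (b / m) hb _ ht
  rw [hx] at this
  convert this using 3
  field_simp
  ring

lemma integral_rpow_sub_rpow_mul_deriv {g g' : ℝ → ℝ} {a b r : ℝ} (hab : a ≤ b) (hr : 0 < r)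
    (hg : ∀ x, HasDerivAt g (g' x) x) (hg' : Continuous g') :
    ∫ x in a..b, ((x - a) ^ r - (b - x) ^ r) * g' x =
      (b - a) ^ r * (g a + g b) - r * (∫ x in a..b, (x - a) ^ (r - 1) * g x)
        - r * ∫ x in a..b, (b - x) ^ (r - 1) * g x := by
  have hgc : Continuous g := continuous_iff_continuousAt.2 fun x => (hg x).continuousAt
  have hw : Continuous fun x : ℝ => (x - a) ^ r - (b - x) ^ r := by
    fun_prop (disch := exact hr.le)
  have hleft : IntervalIntegrable (fun x => (x - a) ^ (r - 1) * g x) volume a b := by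
    have := (intervalIntegral.intervalIntegrable_rpow' (a := 0) (b := b - a) (r := r - 1)
      (by linarith)).comp_sub_right a
    simpa using this.mul_continuousOn hgc.continuousOn
  have hright : IntervalIntegrable (fun x => (b - x) ^ (r - 1) * g x) volume a b := by
    have := ((intervalIntegral.intervalIntegrable_rpow' (a := 0) (b := b - a) (r := r - 1)
      (by linarith)).comp_sub_left b).symm
    simpa using this.mul_continuousOn hgc.continuousOn
  have hmain : IntervalIntegrable (fun x => ((x - a) ^ r - (b - x) ^ r) * g' x) volume a b :=
    (hw.mul hg').intervalIntegrable a b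
  have hderiv : ∀ x ∈ Ioo a b, HasDerivWithinAt (fun x => ((x - a) ^ r - (b - x) ^ r) * g x)
      (r * ((x - a) ^ (r - 1) * g x) + r * ((b - x) ^ (r - 1) * g x)
        + ((x - a) ^ r - (b - x) ^ r) * g' x) (Ioi x) x := by
    intro x hx
    have hxa : HasDerivAt (fun x => (x - a) ^ r) (r * (x - a) ^ (r - 1)) x := by
      simpa using ((hasDerivAt_id x).sub_const a).rpow_const (Or.inl (sub_ne_zero.2 hx.1.ne'))
    have hbx : HasDerivAt (fun x => (b - x) ^ r) (-(r * (b - x) ^ (r - 1))) x := by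
      simpa using ((hasDerivAt_id x).const_sub b).rpow_const (Or.inl (sub_ne_zero.2 hx.2.ne'))
    exact (((hxa.fun_sub hbx).fun_mul (hg x)).congr_deriv (by ring)).hasDerivWithinAt
  have hcont : ContinuousOn (fun x => ((x - a) ^ r - (b - x) ^ r) * g x) (Icc a b) :=
    (hw.mul hgc).continuousOn
  have hftc := intervalIntegral.integral_eq_sub_of_hasDeriv_right_of_le hab hcont hderiv
    (((hleft.const_mul r).add (hright.const_mul r)).add hmain)
  rw [intervalIntegral.integral_add ((hleft.const_mul r).add (hright.const_mul r)) hmain,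
    intervalIntegral.integral_add (hleft.const_mul r) (hright.const_mul r),
    intervalIntegral.integral_const_mul, intervalIntegral.integral_const_mul] at hftc
  simp only [sub_self, Real.zero_rpow hr.ne'] at hftc
  linear_combination hftc

lemma caputoLeft_one (α : ℝ) (f : ℝ → ℝ) (a x : ℝ) :
    caputoLeft α 1 f a x =
      (∫ t in a..x, (x - t) ^ (1 - α - 1) * deriv f t) / Real.Gamma (1 - α) := by
  simp [caputoLeft, div_eq_inv_mul]

lemma caputoRight_one (α : ℝ) (f : ℝ → ℝ) (b x : ℝ) :
    caputoRight α 1 f b x =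
      -(∫ t in x..b, (t - x) ^ (1 - α - 1) * deriv f t) / Real.Gamma (1 - α) := by
  simp [caputoRight, div_eq_inv_mul]

lemma trapezoid_sub_caputo_eq_integral {f : ℝ → ℝ} {a b α : ℝ} (hab : a < b) (hα : α < 1)
    (hf : ContDiff ℝ 2 f) :
    (deriv f a + deriv f b) / 2 - Real.Gamma (1 - α + 1) / (2 * (b - a) ^ (1 - α))
        * (caputoLeft α 1 f a b + (-1:ℝ)^1 * caputoRight α 1 f b a)
      = (∫ x in a..b, ((x - a) ^ (1 - α) - (b - x) ^ (1 - α)) * iteratedDeriv 2 f x)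
        / (2 * (b - a) ^ (1 - α)) := by
  have hr : 0 < 1 - α := sub_pos.2 hα
  have hderiv (x : ℝ) : HasDerivAt (deriv f) (iteratedDeriv 2 f x) x := by
    have := (hf.differentiable_iteratedDeriv 1 (by norm_num)).differentiableAt (x := x)
    simpa [iteratedDeriv_succ] using this.hasDerivAt
  have hparts := integral_rpow_sub_rpow_mul_deriv hab.le hr hderiv
    (hf.continuous_iteratedDeriv 2 le_rfl)
  have hΓ : Real.Gamma (1 - α) ≠ 0 := (Real.Gamma_pos_of_pos hr).ne'
  have hL : (b - a) ^ (1 - α) ≠ 0 := (Real.rpow_pos_of_pos (sub_pos.2 hab) _).ne'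
  rw [caputoLeft_one, caputoRight_one, Real.Gamma_add_one hr.ne', hparts, sub_sub_cancel_left]
  field_simp
  ring

lemma rpow_holder_bound_eq {L K p q r : ℝ} (hL : 0 < L) (hK : 0 ≤ K) (hpq : p.HolderConjugate q)
    (hr : 0 ≤ r) :
    (L ^ (p * r + 1) / (p * r + 1)) ^ (1 / p) * (L * K / 2) ^ (1 / q) / (2 * L ^ r)
      = L / 2 ^ (1 + 1 / q) * (1 / (p * r + 1)) ^ (1 / p) * K ^ (1 / q) := by
  have hp := hpq.pos
  have hpr : 0 < p * r + 1 := by positivity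
  have hexp : (p * r + 1) * (1 / p) + 1 / q = r + 1 := by
    have := hpq.inv_add_inv_eq_one
    field_simp at this ⊢
    linarith
  have hLpow : (L ^ (p * r + 1)) ^ (1 / p) * L ^ (1 / q) = L ^ r * L := by
    rw [← Real.rpow_mul hL.le, ← Real.rpow_add hL, hexp, Real.rpow_add_one hL.ne']
  rw [Real.div_rpow (by positivity) hpr.le, Real.div_rpow (by positivity) zero_le_two,
    Real.mul_rpow hL.le hK, Real.rpow_add two_pos, Real.rpow_one, Real.div_rpow zero_le_one hpr.le,
    Real.one_rpow]
  have h2 : 0 < (2 : ℝ) ^ (1 / q) := by positivity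
  have h3 : 0 < (p * r + 1) ^ (1 / p) := by positivity
  have h4 : 0 < L ^ r := by positivity
  field_simp
  linear_combination (K ^ (1 / q)) * hLpow

theorem caputo_trapezoid_mconvex_holder (f : ℝ → ℝ) (a b α m p q : ℝ)
    (ha : 0 ≤ a) (hab : a < b) (hα : α ∈ Set.Ioo (0:ℝ) 1) (hm : m ∈ Set.Ioc (0:ℝ) 1)
    (hq : 1 < q) (hp : p = q / (q - 1)) (hf : ContDiff ℝ 2 f)
    (hconv : ∀ u ∈ Set.Icc (0:ℝ) (b/m), ∀ v ∈ Set.Icc (0:ℝ) (b/m), ∀ t ∈ Set.Icc (0:ℝ) 1,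
      |iteratedDeriv 2 f (t*u + m*(1-t)*v)| ^ q
        ≤ t * |iteratedDeriv 2 f u| ^ q + m * (1-t) * |iteratedDeriv 2 f v| ^ q) :
    |(deriv f a + deriv f b) / 2
        - Real.Gamma (1 - α + 1) / (2 * (b - a) ^ (1 - α))
          * (caputoLeft α 1 f a b + (-1:ℝ)^1 * caputoRight α 1 f b a)|
      ≤ (b - a) / 2 ^ (1 + 1/q) * (1 / (p * (1 - α) + 1)) ^ (1/p)
          * (|iteratedDeriv 2 f a| ^ q + m * |iteratedDeriv 2 f (b/m)| ^ q) ^ (1/q) := by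
  obtain ⟨hα0, hα1⟩ := hα
  obtain ⟨hm0, hm1⟩ := hm
  have hpq : p.HolderConjugate q := hp ▸ (Real.HolderConjugate.conjExponent hq).symm
  have hba : 0 < b - a := sub_pos.2 hab
  have hH : Continuous (iteratedDeriv 2 f) := hf.continuous_iteratedDeriv 2 le_rfl
  have hbm : b ≤ b / m := le_div_self (by linarith) hm0 hm1
  have hconvex := MConvexOn.integral_le (g := fun x => |iteratedDeriv 2 f x| ^ q) hconv hm0.ne'
    ⟨ha, hab.le.trans hbm⟩ ⟨div_nonneg (by linarith) hm0.le, le_rfl⟩ hab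
    ((hH.abs.rpow_const fun _ => Or.inr (by linarith)).intervalIntegrable a b)
  have hden : 0 < 2 * (b - a) ^ (1 - α) := mul_pos two_pos (Real.rpow_pos_of_pos hba _)
  rw [trapezoid_sub_caputo_eq_integral hab hα1 hf, abs_div, abs_of_pos hden,
    ← rpow_holder_bound_eq hba (by positivity) hpq (by linarith)]
  refine div_le_div_of_nonneg_right ?_ hden.le
  exact abs_integral_rpow_sub_rpow_mul_le hab.le (by linarith) (by linarith) hpq hH hconvex
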